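/- Let K = F_p for a prime p, or K = ℤ. Let S_N ⊆ N(K) be a subset such that for every n ∈ ℕ the image of the subgroup generated by S_N under the canonical projection N(K) → N(K)/N^n(K) is the whole quotient group (i.e. S_N topologically generates the Nottingham group N(K)). Then for every m ≥ 2, the quotient group R(K)/R^m(K) is generated by the images of the elements (1+x, x) and (1, g) for g ∈ S_N; consequently the set {(1+x, x)} ∪ {(1,g) : g ∈ S_N} topologically generates the Riordan group R(K). -/

import Mathlib

open PowerSeries Finset

namespace RiordanPaper

variable {K : Type*} [CommRing K]

noncomputable def comp (f g : PowerSeries K) : PowerSeries K :=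
  PowerSeries.mk fun n => ∑ d ∈ Finset.range (n + 1), coeff d f * coeff n (g ^ d)

lemma coeff_comp (f g : PowerSeries K) (n : ℕ) :
    coeff n (comp f g) = ∑ d ∈ Finset.range (n + 1), coeff d f * coeff n (g ^ d) := by
  simp [comp]

lemma coeff_pow_eq_zero {g : PowerSeries K} (hg : constantCoeff g = 0) {n d : ℕ}
    (h : n < d) : coeff n (g ^ d) = 0 := by
  have hdvd : (X : PowerSeries K) ^ d ∣ g ^ d :=
    pow_dvd_pow_of_dvd (PowerSeries.X_dvd_iff.2 hg) d
  exact (PowerSeries.X_pow_dvd_iff.1 hdvd) n h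

lemma coeff_comp_of_lt {g : PowerSeries K} (hg : constantCoeff g = 0)
    (f : PowerSeries K) {n N : ℕ} (hn : n < N) :
    coeff n (comp f g) = ∑ d ∈ Finset.range N, coeff d f * coeff n (g ^ d) := by
  rw [coeff_comp]
  apply Finset.sum_subset
  · intro d hd
    simp only [Finset.mem_range] at hd ⊢
    omega
  · intro d _ hd'
    simp only [Finset.mem_range] at hd'
    rw [coeff_pow_eq_zero hg (by omega), mul_zero]

lemma coeff_eval₂ {g : PowerSeries K} (hg : constantCoeff g = 0)
    (P : Polynomial K) (n : ℕ) :
    coeff n (Polynomial.eval₂ C g P)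
      = ∑ d ∈ Finset.range (n + 1), P.coeff d * coeff n (g ^ d) := by
  classical
  have h1 : P.natDegree < max (n + 1) (P.natDegree + 1) :=
    lt_of_lt_of_le (Nat.lt_succ_self _) (le_max_right _ _)
  rw [Polynomial.eval₂_eq_sum_range' C h1 g, map_sum]
  have h2 : ∀ d ∈ Finset.range (max (n + 1) (P.natDegree + 1)),
      coeff n (C (P.coeff d) * g ^ d) = P.coeff d * coeff n (g ^ d) := fun d _ => by
    rw [coeff_C_mul]
  rw [Finset.sum_congr rfl h2]
  symm
  apply Finset.sum_subset
  · intro d hd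
    simp only [Finset.mem_range] at hd ⊢
    omega
  · intro d _ hd'
    simp only [Finset.mem_range] at hd'
    rw [coeff_pow_eq_zero hg (by omega), mul_zero]

lemma coeff_comp_eq_eval₂_trunc {g : PowerSeries K} (hg : constantCoeff g = 0)
    (f : PowerSeries K) {n N : ℕ} (hn : n < N) :
    coeff n (comp f g) = coeff n (Polynomial.eval₂ C g (trunc N f)) := by
  rw [coeff_eval₂ hg, coeff_comp]
  apply Finset.sum_congr rfl
  intro d hd
  simp only [Finset.mem_range] at hd
  rw [PowerSeries.coeff_trunc, if_pos (by omega)]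

lemma mul_comp {g : PowerSeries K} (hg : constantCoeff g = 0) (f₁ f₂ : PowerSeries K) :
    comp (f₁ * f₂) g = comp f₁ g * comp f₂ g := by
  ext n
  have key : coeff n (comp (f₁ * f₂) g)
      = coeff n (Polynomial.eval₂ C g (trunc (n + 1) f₁ * trunc (n + 1) f₂)) := by
    rw [coeff_eval₂ hg, coeff_comp]
    apply Finset.sum_congr rfl
    intro d hd
    simp only [Finset.mem_range] at hd
    congr 1
    rw [Polynomial.coeff_mul, PowerSeries.coeff_mul]
    apply Finset.sum_congr rfl
    intro ab hab
    simp at hab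
    rw [PowerSeries.coeff_trunc, PowerSeries.coeff_trunc, if_pos (by omega), if_pos (by omega)]
  rw [key, Polynomial.eval₂_mul, PowerSeries.coeff_mul, PowerSeries.coeff_mul]
  apply Finset.sum_congr rfl
  intro ab hab
  simp at hab
  rw [← coeff_comp_eq_eval₂_trunc hg f₁ (show ab.1 < n + 1 by omega),
    ← coeff_comp_eq_eval₂_trunc hg f₂ (show ab.2 < n + 1 by omega)]

lemma one_comp (g : PowerSeries K) : comp (1 : PowerSeries K) g = 1 := by
  ext n
  rw [coeff_comp, Finset.sum_eq_single 0]
  · simp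
  · intro d _ hd0
    simp [PowerSeries.coeff_one, hd0]
  · intro h
    simp at h

lemma comp_X (f : PowerSeries K) : comp f X = f := by
  ext n
  rw [coeff_comp, Finset.sum_eq_single n]
  · rw [coeff_X_pow, if_pos rfl, mul_one]
  · intro d _ hdn
    rw [coeff_X_pow, if_neg (fun h => hdn h.symm), mul_zero]
  · intro h
    simp at h

lemma X_comp {g : PowerSeries K} (hg : constantCoeff g = 0) : comp X g = g := by
  ext n
  rcases Nat.eq_zero_or_pos n with hn | hn
  · subst hn
    rw [coeff_comp]
    simp [PowerSeries.coeff_X, coeff_zero_eq_constantCoeff_apply, hg]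
  · rw [coeff_comp, Finset.sum_eq_single 1]
    · rw [coeff_one_X, pow_one, one_mul]
    · intro d _ hd1
      rw [PowerSeries.coeff_X, if_neg hd1, zero_mul]
    · intro h
      simp only [Finset.mem_range] at h
      omega

lemma constantCoeff_comp (f g : PowerSeries K) :
    constantCoeff (comp f g) = constantCoeff f := by
  rw [← coeff_zero_eq_constantCoeff_apply, coeff_comp]
  simp

lemma coeff_one_comp (f g : PowerSeries K) :
    coeff 1 (comp f g) = coeff 1 f * coeff 1 g := by
  rw [coeff_comp]
  have : Finset.range 2 = {0, 1} := rfl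
  rw [this, Finset.sum_insert (by simp), Finset.sum_singleton, pow_zero, pow_one]
  simp [PowerSeries.coeff_one]

lemma comp_assoc {g k : PowerSeries K} (hg : constantCoeff g = 0)
    (hk : constantCoeff k = 0) (f : PowerSeries K) :
    comp (comp f g) k = comp f (comp g k) := by
  have hpow : ∀ e : ℕ, (comp g k) ^ e = comp (g ^ e) k := by
    intro e
    induction e with
    | zero => simp [one_comp]
    | succ m ih => rw [pow_succ, pow_succ, ih, mul_comp hk]
  ext n
  rw [coeff_comp, coeff_comp]
  have L1 : ∀ d ∈ Finset.range (n + 1), coeff d (comp f g) * coeff n (k ^ d)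
      = ∑ e ∈ Finset.range (n + 1), coeff e f * coeff d (g ^ e) * coeff n (k ^ d) := by
    intro d hd
    simp only [Finset.mem_range] at hd
    rw [coeff_comp_of_lt hg f hd, Finset.sum_mul]
  rw [Finset.sum_congr rfl L1, Finset.sum_comm]
  apply Finset.sum_congr rfl
  intro e _
  rw [hpow e, coeff_comp, Finset.mul_sum]
  apply Finset.sum_congr rfl
  intro d _
  ring

/-- An element of the Riordan group: a pair `(h, g)` with
`h = 1 + a₁x + ⋯` and `g = x + b₂x² + ⋯`. -/
@[ext]
structure RiordanElem (K : Type*) [CommRing K] where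
  h : PowerSeries K
  g : PowerSeries K
  h_zero : constantCoeff h = 1
  g_zero : constantCoeff g = 0
  g_one : coeff 1 g = 1

namespace RiordanElem

noncomputable instance : Mul (RiordanElem K) :=
  ⟨fun a b => ⟨a.h * comp b.h a.g, comp b.g a.g,
    by rw [map_mul, a.h_zero, one_mul, constantCoeff_comp, b.h_zero],
    by rw [constantCoeff_comp, b.g_zero],
    by rw [coeff_one_comp, b.g_one, a.g_one, one_mul]⟩⟩

noncomputable instance : One (RiordanElem K) :=
  ⟨⟨1, X, map_one _, constantCoeff_X, coeff_one_X⟩⟩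

@[simp] lemma mul_h (a b : RiordanElem K) : (a * b).h = a.h * comp b.h a.g := rfl
@[simp] lemma mul_g (a b : RiordanElem K) : (a * b).g = comp b.g a.g := rfl
@[simp] lemma one_h : (1 : RiordanElem K).h = 1 := rfl
@[simp] lemma one_g : (1 : RiordanElem K).g = X := rfl

noncomputable instance instMonoid : Monoid (RiordanElem K) where
  mul_assoc a b c := by
    ext1
    · show (a.h * comp b.h a.g) * comp c.h (comp b.g a.g)
        = a.h * comp (b.h * comp c.h b.g) a.g
      rw [mul_comp a.g_zero, ← comp_assoc b.g_zero a.g_zero, mul_assoc]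
    · show comp c.g (comp b.g a.g) = comp (comp c.g b.g) a.g
      rw [comp_assoc b.g_zero a.g_zero]
  one_mul a := by
    ext1
    · show (1 : PowerSeries K) * comp a.h X = a.h
      rw [comp_X, one_mul]
    · show comp a.g X = a.g
      exact comp_X a.g
  mul_one a := by
    ext1
    · show a.h * comp 1 a.g = a.h
      rw [one_comp, mul_one]
    · show comp X a.g = a.g
      exact X_comp a.g_zero

end RiordanElem

/-- The Riordan group over `K`, realized as the units of the Riordan monoid. -/
noncomputable abbrev RiordanGroup (K : Type*) [CommRing K] := (RiordanElem K)ˣ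

/-- An element of the Nottingham group: `g = x + b₂x² + ⋯`. -/
@[ext]
structure NottinghamElem (K : Type*) [CommRing K] where
  g : PowerSeries K
  g_zero : constantCoeff g = 0
  g_one : coeff 1 g = 1

namespace NottinghamElem

noncomputable instance : Mul (NottinghamElem K) :=
  ⟨fun a b => ⟨comp b.g a.g,
    by rw [constantCoeff_comp, b.g_zero],
    by rw [coeff_one_comp, b.g_one, a.g_one, one_mul]⟩⟩

noncomputable instance : One (NottinghamElem K) :=
  ⟨⟨X, constantCoeff_X, coeff_one_X⟩⟩

@[simp] lemma mul_g (a b : NottinghamElem K) : (a * b).g = comp b.g a.g := rfl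
@[simp] lemma one_g : (1 : NottinghamElem K).g = X := rfl

noncomputable instance instMonoid : Monoid (NottinghamElem K) where
  mul_assoc a b c := by
    ext1
    show comp c.g (comp b.g a.g) = comp (comp c.g b.g) a.g
    rw [comp_assoc b.g_zero a.g_zero]
  one_mul a := by
    ext1
    show comp a.g X = a.g
    exact comp_X a.g
  mul_one a := by
    ext1
    show comp X a.g = a.g
    exact X_comp a.g_zero

end NottinghamElem

/-- The Nottingham group over `K`, realized as the units of the Nottingham monoid. -/
noncomputable abbrev NottinghamGroup (K : Type*) [CommRing K] := (NottinghamElem K)ˣ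

/-- `h` belongs to `H^n(K)`: the coefficients in degrees `1,…,n-1` vanish
(the constant-coefficient-one condition being imposed separately). -/
def IsHn (n : ℕ) (f : PowerSeries K) : Prop := ∀ i, 0 < i → i < n → coeff i f = 0

/-- `g` belongs to `N^n(K)`: the coefficients in degrees `2,…,n` vanish
(the conditions at degree `0`, `1` being imposed separately). -/
def IsNn (n : ℕ) (g : PowerSeries K) : Prop := ∀ j, 1 < j → j ≤ n → coeff j g = 0

/-- The subset `R^{m,n}(K) = H^m(K) ⋊ N^n(K)` of the Riordan group. -/
def Rmn (K : Type*) [CommRing K] (m n : ℕ) : Set (RiordanGroup K) :=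
  {u | IsHn m ((u : RiordanElem K).h) ∧ IsNn n ((u : RiordanElem K).g)}

/-- The subset `R^n(K) = H^n(K) ⋊ N^n(K)` of the Riordan group. -/
def Rn (K : Type*) [CommRing K] (n : ℕ) : Set (RiordanGroup K) := Rmn K n n

/-!
Modulo `R^m`, an element `(h, g)` is first multiplied by some `(1, s)⁻¹` with `s` in the
closure of `S_N` and `s ≡ g` modulo `N^m`, which leaves `g ∈ N^m`. The `H`-part is then cleared
one degree `n < m` at a time by elements `(e, x)` with `e ≡ 1 + a xⁿ (mod xⁿ⁺¹)`. For `n = 1`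
these are the powers of `(1 + x, x)`: `(h, g) ↦ [x] h` is a homomorphism onto `(K, +)`, which
is generated by `1` when `K = F_p` or `ℤ`. For `2 ≤ n < m`, the commutator of `(1, s)` and
`(1 + x, x)` is `((1 + s) / (1 + x), x)`, and taking `s ≡ x + a xⁿ (mod xᵐ⁺¹)` makes
`(1 + s) / (1 + x) ≡ 1 + a xⁿ (mod xⁿ⁺¹)`.
-/

open scoped commutatorElement

theorem isHn_iff_X_pow_dvd {f : PowerSeries K} (hf : constantCoeff f = 1) {n : ℕ} :
    IsHn n f ↔ X ^ n ∣ f - 1 := by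
  rw [X_pow_dvd_iff]
  refine ⟨fun h i hi => ?_, fun h i hi0 hin => ?_⟩
  · rcases Nat.eq_zero_or_pos i with rfl | hi0
    · simp [hf]
    · simp [h i hi0 hi, coeff_one, hi0.ne']
  · simpa [coeff_one, hi0.ne'] using h i hin

theorem isNn_iff_X_pow_dvd {g : PowerSeries K} (hg0 : constantCoeff g = 0)
    (hg1 : coeff 1 g = 1) {n : ℕ} : IsNn n g ↔ X ^ (n + 1) ∣ g - X := by
  rw [X_pow_dvd_iff]
  refine ⟨fun h j hj => ?_, fun h j hj1 hjn => ?_⟩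
  · match j with
    | 0 => simp [hg0]
    | 1 => simp [hg1]
    | j + 2 => simp [h (j + 2) (by omega) (by omega), coeff_X]
  · simpa [coeff_X, show j ≠ 1 by omega] using h j (by omega)

theorem X_pow_succ_dvd_sub_C_mul_X_pow {φ : PowerSeries K} {n : ℕ} (h : X ^ n ∣ φ) :
    X ^ (n + 1) ∣ φ - C (coeff n φ) * X ^ n := by
  obtain ⟨q, rfl⟩ := h
  have hc : coeff n (X ^ n * q) = constantCoeff q := by simpa using coeff_X_pow_mul q n 0
  rw [hc, pow_succ, show X ^ n * q - C (constantCoeff q) * X ^ n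
    = X ^ n * (q - C (constantCoeff q)) by ring]
  exact mul_dvd_mul_left _ (X_dvd_iff.2 (by simp))

theorem X_pow_dvd_sub_one_of_mul_eq {e v w M : PowerSeries K} {k : ℕ}
    (he : constantCoeff e = 1) (hw : e * v = w) (hek : X ^ k ∣ e - M) (hwk : X ^ k ∣ w - M) :
    X ^ k ∣ v - 1 := by
  have hu : IsUnit e := isUnit_iff_constantCoeff.2 (he ▸ isUnit_one)
  rw [← hu.dvd_mul_left, mul_sub, mul_one, hw, ← sub_sub_sub_cancel_right w e M]
  exact dvd_sub hwk hek

theorem add_comp (f₁ f₂ g : PowerSeries K) : comp (f₁ + f₂) g = comp f₁ g + comp f₂ g := by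
  ext n
  simp [coeff_comp, add_mul, Finset.sum_add_distrib]

theorem sub_comp (f₁ f₂ g : PowerSeries K) : comp (f₁ - f₂) g = comp f₁ g - comp f₂ g := by
  ext n
  simp [coeff_comp, sub_mul, Finset.sum_sub_distrib]

theorem pow_comp {g : PowerSeries K} (hg : constantCoeff g = 0) (f : PowerSeries K) (k : ℕ) :
    comp (f ^ k) g = comp f g ^ k := by
  induction k with
  | zero => simp [one_comp]
  | succ k ih => rw [pow_succ, pow_succ, mul_comp hg, ih]

theorem X_pow_dvd_comp_sub {z g : PowerSeries K} {k : ℕ} (hz : X ^ k ∣ z - X)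
    (hg : constantCoeff g = 0) : X ^ k ∣ comp z g - g := by
  obtain ⟨q, hq⟩ := hz
  have h : comp z g - g = g ^ k * comp q g := calc
    comp z g - g = comp (z - X) g := by rw [sub_comp, X_comp hg]
    _ = g ^ k * comp q g := by rw [hq, mul_comp hg, pow_comp hg, X_comp hg]
  exact h ▸ dvd_mul_of_dvd_left (pow_dvd_pow_of_dvd (X_dvd_iff.2 hg) k) _

theorem coeff_self_pow {g : PowerSeries K} (hg : constantCoeff g = 0) (n : ℕ) :
    coeff n (g ^ n) = coeff 1 g ^ n := by
  obtain ⟨q, rfl⟩ := X_dvd_iff.2 hg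
  simpa [mul_pow] using coeff_X_pow_mul (q ^ n) n 0

/-- `b_n` is solved from `[x^n] ∑_{d ≤ n} b_d g^d = 0` (for `n ≥ 2`), using `[x^n] g^n = 1`. -/
noncomputable def invCoeff (g : PowerSeries K) (n : ℕ) : K :=
  if n = 0 then 0
  else if n = 1 then 1
  else - ∑ d ∈ (Finset.range n).attach, invCoeff g d * coeff n (g ^ (d : ℕ))
termination_by n
decreasing_by exact Finset.mem_range.1 d.2

theorem invCoeff_zero (g : PowerSeries K) : invCoeff g 0 = 0 := by
  rw [invCoeff]; simp

theorem invCoeff_one (g : PowerSeries K) : invCoeff g 1 = 1 := by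
  rw [invCoeff]; simp

theorem invCoeff_of_two_le (g : PowerSeries K) {n : ℕ} (hn : 2 ≤ n) :
    invCoeff g n = - ∑ d ∈ Finset.range n, invCoeff g d * coeff n (g ^ d) := by
  rw [invCoeff, if_neg (by omega), if_neg (by omega),
    ← Finset.sum_attach (Finset.range n) (fun d => invCoeff g d * coeff n (g ^ d))]

noncomputable def compInv (g : PowerSeries K) : PowerSeries K := PowerSeries.mk (invCoeff g)

theorem comp_compInv {g : PowerSeries K} (hg0 : constantCoeff g = 0) (hg1 : coeff 1 g = 1) :
    comp (compInv g) g = X := by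
  ext n
  rw [coeff_comp]
  simp only [compInv, coeff_mk]
  match n with
  | 0 => simp [invCoeff_zero]
  | 1 => simp [Finset.sum_range_succ, invCoeff_zero, invCoeff_one, hg1]
  | n + 2 =>
    rw [Finset.sum_range_succ, coeff_self_pow hg0, hg1, one_pow, mul_one,
      invCoeff_of_two_le g (by omega), coeff_X, if_neg (by omega), add_neg_cancel]

namespace NottinghamElem

noncomputable def rightInv (a : NottinghamElem K) : NottinghamElem K :=
  ⟨compInv a.g, by simp [compInv, ← coeff_zero_eq_constantCoeff_apply, invCoeff_zero],
    by simp [compInv, invCoeff_one]⟩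

theorem mul_rightInv (a : NottinghamElem K) : a * a.rightInv = 1 :=
  NottinghamElem.ext (comp_compInv a.g_zero a.g_one)

theorem isUnit (a : NottinghamElem K) : IsUnit a := by
  have h : a = a.rightInv.rightInv :=
    left_inv_eq_right_inv a.mul_rightInv a.rightInv.mul_rightInv
  exact ⟨⟨a, a.rightInv, a.mul_rightInv,
    (congrArg (a.rightInv * ·) h).trans a.rightInv.mul_rightInv⟩, rfl⟩

theorem isNn_g_iff (a : NottinghamElem K) {n : ℕ} : IsNn n a.g ↔ X ^ (n + 1) ∣ a.g - X :=
  isNn_iff_X_pow_dvd a.g_zero a.g_one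

end NottinghamElem

theorem comp_g_inv_g (u : NottinghamGroup K) :
    comp (u : NottinghamElem K).g (↑u⁻¹ : NottinghamElem K).g = X :=
  congrArg NottinghamElem.g u.inv_mul

def NnSubgroup (K : Type*) [CommRing K] (m : ℕ) : Subgroup (NottinghamGroup K) where
  carrier := {v | IsNn m (v : NottinghamElem K).g}
  one_mem' := (isNn_iff_X_pow_dvd constantCoeff_X coeff_one_X).2 (by simp)
  mul_mem' {a b} ha hb := by
    simp only [Set.mem_ofPred_eq, NottinghamElem.isNn_g_iff] at ha hb ⊢
    have h := dvd_add (X_pow_dvd_comp_sub hb (a : NottinghamElem K).g_zero) ha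
    rwa [sub_add_sub_cancel] at h
  inv_mem' {a} ha := by
    simp only [Set.mem_ofPred_eq, NottinghamElem.isNn_g_iff] at ha ⊢
    have h := X_pow_dvd_comp_sub ha (↑a⁻¹ : NottinghamElem K).g_zero
    rwa [comp_g_inv_g, dvd_sub_comm] at h

namespace RiordanElem

theorem mul_h_of_g_eq_X {e : RiordanElem K} (he : e.g = X) (v : RiordanElem K) :
    (e * v).h = e.h * v.h := by
  rw [mul_h, he, comp_X]

theorem mul_g_of_g_eq_X {e : RiordanElem K} (he : e.g = X) (v : RiordanElem K) :
    (e * v).g = v.g := by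
  rw [mul_g, he, comp_X]

theorem X_dvd_h_sub_one (a : RiordanElem K) : X ∣ a.h - 1 := by
  rw [X_dvd_iff, map_sub, a.h_zero, constantCoeff_one, sub_self]

def toNottingham : RiordanElem K →* NottinghamElem K where
  toFun a := ⟨a.g, a.g_zero, a.g_one⟩
  map_one' := rfl
  map_mul' _ _ := rfl

noncomputable def ofNottingham : NottinghamElem K →* RiordanElem K where
  toFun a := ⟨1, a.g, map_one _, a.g_zero, a.g_one⟩
  map_one' := rfl
  map_mul' a _ := RiordanElem.ext (by rw [mul_h, one_comp, one_mul]) rfl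

/-- Multiplicative because `[x] (h₁ · h₂ ∘ g₁) = [x] h₁ + [x] h₂ · [x] g₁` and `[x] g₁ = 1`. -/
noncomputable def coeffOneH : RiordanElem K →* Multiplicative K where
  toFun a := Multiplicative.ofAdd (coeff 1 a.h)
  map_one' := by simp
  map_mul' a b := by
    rw [← ofAdd_add, mul_h, PowerSeries.coeff_mul, Finset.Nat.antidiagonal_succ]
    simp [coeff_one_comp, constantCoeff_comp, a.h_zero, b.h_zero, a.g_one, add_comm]

end RiordanElem

noncomputable abbrev riordanToNottingham : RiordanGroup K →* NottinghamGroup K :=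
  Units.map RiordanElem.toNottingham

noncomputable abbrev nottinghamToRiordan : NottinghamGroup K →* RiordanGroup K :=
  Units.map RiordanElem.ofNottingham

theorem riordanToNottingham_nottinghamToRiordan (s : NottinghamGroup K) :
    riordanToNottingham (nottinghamToRiordan s) = s :=
  rfl

@[simp]
theorem h_nottinghamToRiordan (s : NottinghamGroup K) :
    (↑(nottinghamToRiordan s) : RiordanElem K).h = 1 :=
  rfl

@[simp]
theorem g_nottinghamToRiordan (s : NottinghamGroup K) :
    (↑(nottinghamToRiordan s) : RiordanElem K).g = (s : NottinghamElem K).g :=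
  rfl

theorem g_eq_X_of_riordanToNottingham_eq_one {u : RiordanGroup K}
    (hu : riordanToNottingham u = 1) : (u : RiordanElem K).g = X :=
  congrArg (fun v : NottinghamGroup K => (v : NottinghamElem K).g) hu

noncomputable def oneAddX (K : Type*) [CommRing K] : RiordanGroup K where
  val := ⟨1 + X, X, by simp, constantCoeff_X, coeff_one_X⟩
  inv := ⟨invOfUnit (1 + X) 1, X, by simp, constantCoeff_X, coeff_one_X⟩
  val_inv := RiordanElem.ext (by simp [comp_X, mul_invOfUnit]) (comp_X X)
  inv_val := RiordanElem.ext (by simp [comp_X, mul_comm, mul_invOfUnit]) (comp_X X)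

@[simp]
theorem h_oneAddX : (↑(oneAddX K) : RiordanElem K).h = 1 + X :=
  rfl

theorem riordanToNottingham_oneAddX : riordanToNottingham (oneAddX K) = 1 :=
  rfl

theorem g_oneAddX_zpow (k : ℤ) : (↑(oneAddX K ^ k) : RiordanElem K).g = X :=
  g_eq_X_of_riordanToNottingham_eq_one (by rw [map_zpow, riordanToNottingham_oneAddX, one_zpow])

theorem coeff_one_h_oneAddX_zpow (k : ℤ) : coeff 1 (↑(oneAddX K ^ k) : RiordanElem K).h = k := by
  have h := map_zpow (RiordanElem.coeffOneH.comp (Units.coeHom _)) (oneAddX K) k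
  have h1 : RiordanElem.coeffOneH (oneAddX K : RiordanElem K) = Multiplicative.ofAdd 1 := by
    simp [RiordanElem.coeffOneH, oneAddX]
  simp only [MonoidHom.coe_comp, Function.comp_apply, Units.coeHom_apply, h1] at h
  simpa [RiordanElem.coeffOneH, ← ofAdd_zsmul] using h

theorem X_sq_dvd_h_oneAddX_zpow (k : ℤ) :
    X ^ 2 ∣ (↑(oneAddX K ^ k) : RiordanElem K).h - (1 + C (k : K) * X) := by
  have h := X_pow_succ_dvd_sub_C_mul_X_pow (n := 1)
    (φ := (↑(oneAddX K ^ k) : RiordanElem K).h - 1)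
    (by rw [pow_one]; exact RiordanElem.X_dvd_h_sub_one _)
  rwa [sub_sub, map_sub, coeff_one_h_oneAddX_zpow, coeff_one, if_neg one_ne_zero, sub_zero,
    pow_one] at h

theorem g_commutator_oneAddX (s : NottinghamGroup K) :
    (↑⁅nottinghamToRiordan s, oneAddX K⁆ : RiordanElem K).g = X :=
  g_eq_X_of_riordanToNottingham_eq_one (by
    rw [map_commutatorElement, riordanToNottingham_nottinghamToRiordan,
      riordanToNottingham_oneAddX, commutatorElement_one_right])

theorem h_commutator_oneAddX_mul (s : NottinghamGroup K) :
    (↑⁅nottinghamToRiordan s, oneAddX K⁆ : RiordanElem K).h * (1 + X)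
      = 1 + (s : NottinghamElem K).g := by
  have hc : ⁅nottinghamToRiordan s, oneAddX K⁆ * oneAddX K
      = nottinghamToRiordan s * oneAddX K * (nottinghamToRiordan s)⁻¹ := by
    rw [commutatorElement_def, inv_mul_cancel_right]
  have h := congrArg (fun u : RiordanGroup K => (u : RiordanElem K).h) hc
  rw [← map_inv] at h
  simpa only [Units.val_mul, RiordanElem.mul_h_of_g_eq_X (g_commutator_oneAddX s),
    RiordanElem.mul_h, RiordanElem.mul_g, h_nottinghamToRiordan, g_nottinghamToRiordan,
    h_oneAddX, one_comp, add_comp, X_comp (s : NottinghamElem K).g_zero, one_mul, mul_one] using h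

theorem X_pow_succ_dvd_h_commutator_oneAddX {s : NottinghamGroup K} {n : ℕ} {a : K}
    (hs : X ^ (n + 1) ∣ (s : NottinghamElem K).g - (X + C a * X ^ n)) :
    X ^ (n + 1) ∣ (↑⁅nottinghamToRiordan s, oneAddX K⁆ : RiordanElem K).h
      - (1 + C a * X ^ n) := by
  have hu : IsUnit (1 + X : PowerSeries K) := isUnit_iff_constantCoeff.2 (by simp)
  rw [← hu.dvd_mul_right, sub_mul, h_commutator_oneAddX_mul,
    show 1 + (s : NottinghamElem K).g - (1 + C a * X ^ n) * (1 + X)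
      = ((s : NottinghamElem K).g - (X + C a * X ^ n)) - X ^ (n + 1) * C a by ring]
  exact dvd_sub hs (dvd_mul_right _ _)

theorem exists_mem_closure_X_pow_dvd_g_sub {S : Set (NottinghamGroup K)} {m : ℕ}
    (hS : ∀ v : NottinghamGroup K, ∃ s ∈ Subgroup.closure S, s⁻¹ * v ∈ NnSubgroup K m)
    (v : NottinghamGroup K) :
    ∃ s ∈ Subgroup.closure S,
      X ^ (m + 1) ∣ (s : NottinghamElem K).g - (v : NottinghamElem K).g := by
  obtain ⟨s, hs, hsv⟩ := hS v
  have hv : (↑(s * (s⁻¹ * v)) : NottinghamElem K).g = (v : NottinghamElem K).g := by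
    rw [mul_inv_cancel_left]
  refine ⟨s, hs, dvd_sub_comm.1 (hv ▸ ?_)⟩
  exact X_pow_dvd_comp_sub (((↑(s⁻¹ * v) : NottinghamElem K).isNn_g_iff).1 hsv)
    (s : NottinghamElem K).g_zero

def riordanGenerators (S : Set (NottinghamGroup K)) : Set (RiordanGroup K) :=
  {u | ((u : RiordanElem K).h = 1 + X ∧ (u : RiordanElem K).g = X) ∨
    ((u : RiordanElem K).h = 1 ∧ ∃ s ∈ S, (u : RiordanElem K).g = (s : NottinghamElem K).g)}

theorem oneAddX_mem_closure_riordanGenerators (S : Set (NottinghamGroup K)) :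
    oneAddX K ∈ Subgroup.closure (riordanGenerators S) :=
  Subgroup.subset_closure (Or.inl ⟨rfl, rfl⟩)

theorem nottinghamToRiordan_mem_closure_riordanGenerators {S : Set (NottinghamGroup K)}
    {s : NottinghamGroup K} (hs : s ∈ Subgroup.closure S) :
    nottinghamToRiordan s ∈ Subgroup.closure (riordanGenerators S) :=
  (Subgroup.closure_le ((Subgroup.closure (riordanGenerators S)).comap nottinghamToRiordan)).2
    (fun t ht => Subgroup.subset_closure (Or.inr ⟨rfl, t, ht, rfl⟩)) hs

theorem exists_mem_closure_riordanGenerators_h_modEq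
    (hK : Function.Surjective (Int.cast : ℤ → K)) {S : Set (NottinghamGroup K)} {m : ℕ}
    (hS : ∀ v : NottinghamGroup K, ∃ s ∈ Subgroup.closure S, s⁻¹ * v ∈ NnSubgroup K m)
    (n : ℕ) (hn : 1 ≤ n) (hnm : n < m) (a : K) :
    ∃ e ∈ Subgroup.closure (riordanGenerators S), (e : RiordanElem K).g = X ∧
      X ^ (n + 1) ∣ (e : RiordanElem K).h - (1 + C a * X ^ n) := by
  have hE := oneAddX_mem_closure_riordanGenerators S
  obtain rfl | hn := hn.eq_or_lt
  · obtain ⟨k, rfl⟩ := hK a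
    exact ⟨oneAddX K ^ k, zpow_mem hE k, g_oneAddX_zpow k,
      by simpa using X_sq_dvd_h_oneAddX_zpow (K := K) k⟩
  let τ : NottinghamElem K := ⟨X + C a * X ^ n, by simp [zero_pow (by omega : n ≠ 0)],
    by simp [coeff_X_pow, hn.ne]⟩
  obtain ⟨s, hs, hsτ⟩ := exists_mem_closure_X_pow_dvd_g_sub hS τ.isUnit.unit
  have hs' := nottinghamToRiordan_mem_closure_riordanGenerators hs
  refine ⟨⁅nottinghamToRiordan s, oneAddX K⁆, ?_, g_commutator_oneAddX s,
    X_pow_succ_dvd_h_commutator_oneAddX ((pow_dvd_pow X (by omega)).trans hsτ)⟩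
  rw [commutatorElement_def]
  exact mul_mem (mul_mem (mul_mem hs' hE) (inv_mem hs')) (inv_mem hE)

theorem mem_Rn_iff {m : ℕ} {u : RiordanGroup K} :
    u ∈ Rn K m ↔ X ^ m ∣ (u : RiordanElem K).h - 1 ∧ X ^ (m + 1) ∣ (u : RiordanElem K).g - X :=
  and_congr (isHn_iff_X_pow_dvd (u : RiordanElem K).h_zero)
    (isNn_iff_X_pow_dvd (u : RiordanElem K).g_zero (u : RiordanElem K).g_one)

theorem exists_mem_inv_mul_mem_Rn {G : Subgroup (RiordanGroup K)} {m : ℕ}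
    (hG : ∀ n, 1 ≤ n → n < m → ∀ a : K, ∃ e ∈ G, (e : RiordanElem K).g = X ∧
      X ^ (n + 1) ∣ (e : RiordanElem K).h - (1 + C a * X ^ n))
    {n : ℕ} (hn : 1 ≤ n) {w : RiordanGroup K} (hwg : X ^ (m + 1) ∣ (w : RiordanElem K).g - X)
    (hwh : X ^ n ∣ (w : RiordanElem K).h - 1) : ∃ t ∈ G, t⁻¹ * w ∈ Rn K m := by
  by_cases hnm : m ≤ n
  · exact ⟨1, one_mem G, by
      rw [inv_one, one_mul, mem_Rn_iff]; exact ⟨(pow_dvd_pow X hnm).trans hwh, hwg⟩⟩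
  obtain ⟨e, heG, heg, heh⟩ := hG n hn (by omega) (coeff n ((w : RiordanElem K).h - 1))
  have hw : (e : RiordanElem K) * ↑(e⁻¹ * w) = w := by rw [← Units.val_mul, mul_inv_cancel_left]
  have hvg : (↑(e⁻¹ * w) : RiordanElem K).g = (w : RiordanElem K).g :=
    (RiordanElem.mul_g_of_g_eq_X heg _).symm.trans (congrArg RiordanElem.g hw)
  have hvh : X ^ (n + 1) ∣ (↑(e⁻¹ * w) : RiordanElem K).h - 1 := by
    refine X_pow_dvd_sub_one_of_mul_eq (w := (w : RiordanElem K).h) (e : RiordanElem K).h_zero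
      ?_ heh ?_
    · rw [← RiordanElem.mul_h_of_g_eq_X heg, hw]
    · rw [← sub_sub]; exact X_pow_succ_dvd_sub_C_mul_X_pow hwh
  obtain ⟨t, htG, ht⟩ := exists_mem_inv_mul_mem_Rn hG (n := n + 1) (by omega) (hvg ▸ hwg) hvh
  exact ⟨e * t, mul_mem heG htG, by rwa [mul_inv_rev, mul_assoc]⟩
termination_by m - n

theorem exists_mem_closure_riordanGenerators_inv_mul_mem_Rn
    (hK : Function.Surjective (Int.cast : ℤ → K)) {S : Set (NottinghamGroup K)} {m : ℕ}
    (hS : ∀ v : NottinghamGroup K, ∃ s ∈ Subgroup.closure S, s⁻¹ * v ∈ NnSubgroup K m)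
    (u : RiordanGroup K) :
    ∃ t ∈ Subgroup.closure (riordanGenerators S), t⁻¹ * u ∈ Rn K m := by
  obtain ⟨s, hs, hsu⟩ := hS (riordanToNottingham u)
  have hwg : riordanToNottingham ((nottinghamToRiordan s)⁻¹ * u) ∈ NnSubgroup K m := by
    rwa [map_mul, map_inv, riordanToNottingham_nottinghamToRiordan]
  obtain ⟨t, ht, htu⟩ := exists_mem_inv_mul_mem_Rn (w := (nottinghamToRiordan s)⁻¹ * u)
    (exists_mem_closure_riordanGenerators_h_modEq hK hS) le_rfl
    ((NottinghamElem.isNn_g_iff _).1 hwg)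
    (by rw [pow_one]; exact RiordanElem.X_dvd_h_sub_one _)
  exact ⟨nottinghamToRiordan s * t,
    mul_mem (nottinghamToRiordan_mem_closure_riordanGenerators hs) ht,
    by rwa [mul_inv_rev, mul_assoc]⟩

theorem exists_mem_closure_riordanGenerators_mk_eq
    (hK : Function.Surjective (Int.cast : ℤ → K)) (S_N : Set (NottinghamGroup K))
    (hS : ∀ (n : ℕ) (Nn : Subgroup (NottinghamGroup K)),
      (Nn : Set (NottinghamGroup K))
          = {v : NottinghamGroup K | IsNn n ((v : NottinghamElem K).g)} →
      ∀ x : NottinghamGroup K ⧸ Nn, ∃ s ∈ Subgroup.closure S_N, QuotientGroup.mk s = x)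
    (m : ℕ) (Rm : Subgroup (RiordanGroup K)) (hRm : (Rm : Set (RiordanGroup K)) = Rn K m)
    (x : RiordanGroup K ⧸ Rm) :
    ∃ u ∈ Subgroup.closure (riordanGenerators S_N), QuotientGroup.mk u = x := by
  obtain ⟨u, rfl⟩ := QuotientGroup.mk_surjective x
  have hS' (v : NottinghamGroup K) : ∃ s ∈ Subgroup.closure S_N, s⁻¹ * v ∈ NnSubgroup K m :=
    (hS m (NnSubgroup K m) rfl v).imp fun _ ⟨hs, hsv⟩ => ⟨hs, QuotientGroup.eq.1 hsv⟩
  obtain ⟨t, ht, htu⟩ := exists_mem_closure_riordanGenerators_inv_mul_mem_Rn hK hS' u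
  exact ⟨t, ht, QuotientGroup.eq.2 (by rwa [← SetLike.mem_coe, hRm])⟩

theorem riordan_topologically_generated_general (p : ℕ) :
    (∀ S_N : Set (NottinghamGroup (ZMod p)),
      (∀ (n : ℕ) (Nn : Subgroup (NottinghamGroup (ZMod p))),
        (Nn : Set (NottinghamGroup (ZMod p)))
            = {v : NottinghamGroup (ZMod p) | IsNn n ((v : NottinghamElem (ZMod p)).g)} →
        ∀ x : NottinghamGroup (ZMod p) ⧸ Nn,
          ∃ s ∈ Subgroup.closure S_N, QuotientGroup.mk s = x) →
      ∀ (m : ℕ), 2 ≤ m → ∀ (Rm : Subgroup (RiordanGroup (ZMod p))),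
        (Rm : Set (RiordanGroup (ZMod p))) = Rn (ZMod p) m →
        ∀ x : RiordanGroup (ZMod p) ⧸ Rm,
          ∃ u ∈ Subgroup.closure
            {u : RiordanGroup (ZMod p) |
              ((u : RiordanElem (ZMod p)).h = 1 + X ∧
                (u : RiordanElem (ZMod p)).g = X) ∨
              ((u : RiordanElem (ZMod p)).h = 1 ∧
                ∃ s ∈ S_N, (u : RiordanElem (ZMod p)).g
                  = (s : NottinghamElem (ZMod p)).g)},
            QuotientGroup.mk u = x) ∧
    (∀ S_N : Set (NottinghamGroup ℤ),
      (∀ (n : ℕ) (Nn : Subgroup (NottinghamGroup ℤ)),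
        (Nn : Set (NottinghamGroup ℤ)) = {v : NottinghamGroup ℤ | IsNn n ((v : NottinghamElem ℤ).g)} →
        ∀ x : NottinghamGroup ℤ ⧸ Nn,
          ∃ s ∈ Subgroup.closure S_N, QuotientGroup.mk s = x) →
      ∀ (m : ℕ), 2 ≤ m → ∀ (Rm : Subgroup (RiordanGroup ℤ)),
        (Rm : Set (RiordanGroup ℤ)) = Rn ℤ m →
        ∀ x : RiordanGroup ℤ ⧸ Rm,
          ∃ u ∈ Subgroup.closure
            {u : RiordanGroup ℤ |
              ((u : RiordanElem ℤ).h = 1 + X ∧ (u : RiordanElem ℤ).g = X) ∨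
              ((u : RiordanElem ℤ).h = 1 ∧
                ∃ s ∈ S_N, (u : RiordanElem ℤ).g = (s : NottinghamElem ℤ).g)},
            QuotientGroup.mk u = x) :=
  ⟨fun S_N hS m _ Rm hRm x =>
    exists_mem_closure_riordanGenerators_mk_eq ZMod.intCast_surjective S_N hS m Rm hRm x,
  fun S_N hS m _ Rm hRm x =>
    exists_mem_closure_riordanGenerators_mk_eq (fun n => ⟨n, Int.cast_id⟩) S_N hS m Rm hRm x⟩

/-- for `K = F_p` or `K = ℤ`, if `S_N` topologically generates the Nottingham
group `N(K)` (its image generates every quotient `N(K)/N^n(K)`), then the images of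
`(1+x, x)` together with `(1, g)`, `g ∈ S_N`, generate every quotient `R(K)/R^m(K)`;
that is, `{(1+x,x)} ∪ {(1,g) : g ∈ S_N}` topologically generates the Riordan group. -/
theorem riordan_topologically_generated (p : ℕ) (hp : p.Prime) :
    (∀ S_N : Set (NottinghamGroup (ZMod p)),
      (∀ (n : ℕ) (Nn : Subgroup (NottinghamGroup (ZMod p))),
        (Nn : Set (NottinghamGroup (ZMod p)))
            = {v : NottinghamGroup (ZMod p) | IsNn n ((v : NottinghamElem (ZMod p)).g)} →
        ∀ x : NottinghamGroup (ZMod p) ⧸ Nn,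
          ∃ s ∈ Subgroup.closure S_N, QuotientGroup.mk s = x) →
      ∀ (m : ℕ), 2 ≤ m → ∀ (Rm : Subgroup (RiordanGroup (ZMod p))),
        (Rm : Set (RiordanGroup (ZMod p))) = Rn (ZMod p) m →
        ∀ x : RiordanGroup (ZMod p) ⧸ Rm,
          ∃ u ∈ Subgroup.closure
            {u : RiordanGroup (ZMod p) |
              ((u : RiordanElem (ZMod p)).h = 1 + X ∧
                (u : RiordanElem (ZMod p)).g = X) ∨
              ((u : RiordanElem (ZMod p)).h = 1 ∧
                ∃ s ∈ S_N, (u : RiordanElem (ZMod p)).g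
                  = (s : NottinghamElem (ZMod p)).g)},
            QuotientGroup.mk u = x) ∧
    (∀ S_N : Set (NottinghamGroup ℤ),
      (∀ (n : ℕ) (Nn : Subgroup (NottinghamGroup ℤ)),
        (Nn : Set (NottinghamGroup ℤ)) = {v : NottinghamGroup ℤ | IsNn n ((v : NottinghamElem ℤ).g)} →
        ∀ x : NottinghamGroup ℤ ⧸ Nn,
          ∃ s ∈ Subgroup.closure S_N, QuotientGroup.mk s = x) →
      ∀ (m : ℕ), 2 ≤ m → ∀ (Rm : Subgroup (RiordanGroup ℤ)),
        (Rm : Set (RiordanGroup ℤ)) = Rn ℤ m →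
        ∀ x : RiordanGroup ℤ ⧸ Rm,
          ∃ u ∈ Subgroup.closure
            {u : RiordanGroup ℤ |
              ((u : RiordanElem ℤ).h = 1 + X ∧ (u : RiordanElem ℤ).g = X) ∨
              ((u : RiordanElem ℤ).h = 1 ∧
                ∃ s ∈ S_N, (u : RiordanElem ℤ).g = (s : NottinghamElem ℤ).g)},
            QuotientGroup.mk u = x) :=
  riordan_topologically_generated_general p

end RiordanPaper
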